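/- arXiv:2509.02829 — 2 statements merged into one kernel-verified Lean document; each statement's English description precedes it below -/
import Mathlib

section
/- Fix a nonempty J ⊆ [d], a target probability array s^J on [n]^{|J|}, and a probability array q† on [n]^d with supp(s^J) ⊆ supp(q†^(J)), where q†^(J) is the J-margin of q†. Then the I-projection q* of q† on the Fréchet class F_J = {p : p^(J) = s^J} exists, is unique, and equals q*_i = q†_i · s^J_{i_J} / q†^(J)_{i_J} for i ∈ supp(q†) and 0 otherwise. -/
open Real BigOperators ENNReal

def IsProbArray {ι : Type*} [Fintype ι] (p : ι → ℝ) : Prop :=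
  (∀ i, 0 ≤ p i) ∧ ∑ i : ι, p i = 1

noncomputable def klArr {ι : Type*} [Fintype ι] (p q : ι → ℝ) : ℝ≥0∞ :=
  open scoped Classical in
  if ∀ i, q i = 0 → p i = 0
  then ENNReal.ofReal (∑ i : ι, p i * Real.log (p i / q i)) else ⊤

/-- The `J`-margin of a probability array on `[n]^d`. -/
noncomputable def marginArr {d n : ℕ} (p : (Fin d → Fin n) → ℝ)
    (J : Finset (Fin d)) (iJ : J → Fin n) : ℝ :=
  open scoped Classical in
  ∑ i ∈ Finset.univ.filter (fun i : Fin d → Fin n => ∀ j : J, i j = iJ j), p i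

/-!
Write `q^(J)` for the `J`-margin of `q = q†` and `r k = s^J k / q^(J) k`, so that
`q* = q · (r ∘ π_J)`. For every `p ≪ q` in the Fréchet class, `log (q* i / q i) = log r (π_J i)`
is constant on the fibres of `π_J`, hence `∑ p log (q* / q) = ∑ s^J log r` depends on `p` only
through its margin and equals `I(q*‖q)`. This is the Pythagorean identity
`I(p‖q) = I(p‖q*) + I(q*‖q)` on `F_J` (both sides are `⊤` when `p` is not `≪ q`). Minimality
follows, and uniqueness from Gibbs' inequality: `∑ p log (p / q) = ∑ q klFun (p / q)` for arrays
of equal mass, and `klFun` vanishes only at `1`.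
-/

open InformationTheory Finset

section Gibbs

variable {ι : Type*} [Fintype ι] {p q r : ι → ℝ}

lemma sum_mul_log_div_eq_sum_mul_klFun (hpq : ∀ i, q i = 0 → p i = 0)
    (hsum : ∑ i, p i = ∑ i, q i) :
    ∑ i, p i * log (p i / q i) = ∑ i, q i * klFun (p i / q i) := by
  have hterm : ∀ i, q i * klFun (p i / q i) = p i * log (p i / q i) + (q i - p i) := by
    intro i
    by_cases h : q i = 0
    · simp [h, hpq i h]
    · rw [klFun_apply]; field_simp; ring
  simp only [hterm, sum_add_distrib, sum_sub_distrib, hsum, sub_self, add_zero]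

lemma sum_mul_log_div_nonneg (hp : ∀ i, 0 ≤ p i) (hq : ∀ i, 0 ≤ q i)
    (hpq : ∀ i, q i = 0 → p i = 0) (hsum : ∑ i, p i = ∑ i, q i) :
    0 ≤ ∑ i, p i * log (p i / q i) := by
  rw [sum_mul_log_div_eq_sum_mul_klFun hpq hsum]
  exact sum_nonneg fun i _ => mul_nonneg (hq i) (klFun_nonneg (div_nonneg (hp i) (hq i)))

lemma eq_of_sum_mul_log_div_nonpos (hp : ∀ i, 0 ≤ p i) (hq : ∀ i, 0 ≤ q i)
    (hpq : ∀ i, q i = 0 → p i = 0) (hsum : ∑ i, p i = ∑ i, q i)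
    (h : ∑ i, p i * log (p i / q i) ≤ 0) : p = q := by
  have hterm_nonneg : ∀ i ∈ univ, 0 ≤ q i * klFun (p i / q i) := fun i _ =>
    mul_nonneg (hq i) (klFun_nonneg (div_nonneg (hp i) (hq i)))
  rw [sum_mul_log_div_eq_sum_mul_klFun hpq hsum] at h
  have hterm := (sum_eq_zero_iff_of_nonneg hterm_nonneg).1
    (le_antisymm h (sum_nonneg hterm_nonneg))
  funext i
  by_cases hqi : q i = 0
  · rw [hqi, hpq i hqi]
  · have hklFun := (mul_eq_zero.1 (hterm i (mem_univ i))).resolve_left hqi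
    exact (div_eq_one_iff_eq hqi).1 ((klFun_eq_zero_iff (div_nonneg (hp i) (hq i))).1 hklFun)

lemma sum_mul_log_div_eq_add (hpr : ∀ i, r i = 0 → p i = 0) (hrq : ∀ i, q i = 0 → r i = 0) :
    ∑ i, p i * log (p i / q i)
      = ∑ i, p i * log (p i / r i) + ∑ i, p i * log (r i / q i) := by
  rw [← sum_add_distrib]
  refine sum_congr rfl fun i _ => ?_
  by_cases hpi : p i = 0
  · simp [hpi]
  · have hri : r i ≠ 0 := fun h => hpi (hpr i h)
    have hqi : q i ≠ 0 := fun h => hri (hrq i h)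
    rw [log_div hpi hqi, log_div hpi hri, log_div hri hqi]
    ring

lemma klArr_of_absCont (hpq : ∀ i, q i = 0 → p i = 0) :
    klArr p q = ENNReal.ofReal (∑ i, p i * log (p i / q i)) := by
  simp only [klArr, if_pos hpq]

lemma klArr_of_not_absCont (hpq : ¬ ∀ i, q i = 0 → p i = 0) : klArr p q = ⊤ := by
  simp only [klArr, if_neg hpq]

lemma eq_of_klArr_eq_zero (hp : ∀ i, 0 ≤ p i) (hq : ∀ i, 0 ≤ q i)
    (hsum : ∑ i, p i = ∑ i, q i) (h : klArr p q = 0) : p = q := by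
  by_cases hpq : ∀ i, q i = 0 → p i = 0
  · rw [klArr_of_absCont hpq, ENNReal.ofReal_eq_zero] at h
    exact eq_of_sum_mul_log_div_nonpos hp hq hpq hsum h
  · simp [klArr_of_not_absCont hpq] at h

end Gibbs

section Fiber

variable {ι κ : Type*} [Fintype ι] [DecidableEq κ] (g : ι → κ) {p q : ι → ℝ} {s : κ → ℝ}

def fiberSum (p : ι → ℝ) (k : κ) : ℝ := ∑ i with g i = k, p i

/-- Where the margin of `q` vanishes, `q` vanishes on the whole fibre, so the junk value
`s k / 0 = 0` is harmless. -/
noncomputable def scaleToMargin (q : ι → ℝ) (s : κ → ℝ) (i : ι) : ℝ :=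
  q i * (s (g i) / fiberSum g q (g i))

lemma fiberSum_nonneg (hp : ∀ i, 0 ≤ p i) (k : κ) : 0 ≤ fiberSum g p k :=
  sum_nonneg fun i _ => hp i

lemma le_fiberSum (hp : ∀ i, 0 ≤ p i) (i : ι) : p i ≤ fiberSum g p (g i) :=
  single_le_sum (fun j _ => hp j) (by simp)

lemma sum_fiberSum [Fintype κ] (p : ι → ℝ) : ∑ k, fiberSum g p k = ∑ i, p i :=
  sum_fiberwise univ g p

lemma fiberSum_mul_comp (p : ι → ℝ) (f : κ → ℝ) (k : κ) :
    fiberSum g (fun i => p i * f (g i)) k = fiberSum g p k * f k := by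
  rw [fiberSum, fiberSum, sum_mul]
  exact sum_congr rfl fun i hi => by rw [(mem_filter.1 hi).2]

lemma sum_mul_comp_eq_sum_fiberSum_mul [Fintype κ] (p : ι → ℝ) (f : κ → ℝ) :
    ∑ i, p i * f (g i) = ∑ k, fiberSum g p k * f k := by
  simp only [← sum_fiberSum g, fiberSum_mul_comp]

lemma scaleToMargin_nonneg (hq : ∀ i, 0 ≤ q i) (hs : ∀ k, 0 ≤ s k) (i : ι) :
    0 ≤ scaleToMargin g q s i :=
  mul_nonneg (hq i) (div_nonneg (hs _) (fiberSum_nonneg g hq _))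

lemma scaleToMargin_absCont (i : ι) (hi : q i = 0) : scaleToMargin g q s i = 0 := by
  simp [scaleToMargin, hi]

lemma scaleToMargin_div (i : ι) (hqi : q i ≠ 0) :
    scaleToMargin g q s i / q i = s (g i) / fiberSum g q (g i) :=
  mul_div_cancel_left₀ _ hqi

lemma fiberSum_scaleToMargin (hs : ∀ k, fiberSum g q k = 0 → s k = 0) :
    fiberSum g (scaleToMargin g q s) = s := by
  funext k
  refine (fiberSum_mul_comp g q (fun k => s k / fiberSum g q k) k).trans ?_
  by_cases hk : fiberSum g q k = 0
  · rw [hk, hs k hk, zero_mul]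
  · exact mul_div_cancel₀ _ hk

lemma sum_scaleToMargin [Fintype κ] (hs : ∀ k, fiberSum g q k = 0 → s k = 0) :
    ∑ i, scaleToMargin g q s i = ∑ k, s k := by
  rw [← sum_fiberSum g, fiberSum_scaleToMargin g hs]

lemma absCont_scaleToMargin (hp : ∀ i, 0 ≤ p i) (hq : ∀ i, 0 ≤ q i)
    (hpm : fiberSum g p = s) (hpq : ∀ i, q i = 0 → p i = 0) (i : ι)
    (hi : scaleToMargin g q s i = 0) : p i = 0 := by
  by_cases hqi : q i = 0
  · exact hpq i hqi
  have hm : fiberSum g q (g i) ≠ 0 :=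
    ((lt_of_le_of_ne (hq i) (Ne.symm hqi)).trans_le (le_fiberSum g hq i)).ne'
  have hsi : s (g i) = 0 := by
    simpa [scaleToMargin, hqi, hm] using hi
  exact le_antisymm (hsi ▸ hpm ▸ le_fiberSum g hp i) (hp i)

lemma sum_mul_log_scaleToMargin_div [Fintype κ] (hpm : fiberSum g p = s)
    (hpq : ∀ i, q i = 0 → p i = 0) :
    ∑ i, p i * log (scaleToMargin g q s i / q i)
      = ∑ k, s k * log (s k / fiberSum g q k) := by
  have hterm : ∀ i, p i * log (scaleToMargin g q s i / q i)
      = p i * log (s (g i) / fiberSum g q (g i)) := by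
    intro i
    by_cases hpi : p i = 0
    · simp [hpi]
    · rw [scaleToMargin_div g i fun h => hpi (hpq i h)]
  simp only [hterm, sum_mul_comp_eq_sum_fiberSum_mul g p (fun k => log (s k / fiberSum g q k)), hpm]

theorem klArr_eq_klArr_scaleToMargin_add [Fintype κ] (hp : ∀ i, 0 ≤ p i)
    (hq : ∀ i, 0 ≤ q i) (hs : ∀ k, fiberSum g q k = 0 → s k = 0) (hsum : ∑ k, s k = ∑ i, q i)
    (hpm : fiberSum g p = s) :
    klArr p q = klArr p (scaleToMargin g q s) + klArr (scaleToMargin g q s) q := by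
  have hs0 : ∀ k, 0 ≤ s k := fun k => hpm ▸ fiberSum_nonneg g hp k
  have hr0 := scaleToMargin_nonneg g hq hs0
  have hrq : ∀ i, q i = 0 → scaleToMargin g q s i = 0 := scaleToMargin_absCont g
  have hrsum : ∑ i, scaleToMargin g q s i = ∑ k, s k := sum_scaleToMargin g hs
  have hpsum : ∑ i, p i = ∑ i, scaleToMargin g q s i := by
    rw [← sum_fiberSum g p, hpm, hrsum]
  by_cases hpq : ∀ i, q i = 0 → p i = 0
  · have hpr := absCont_scaleToMargin g hp hq hpm hpq
    rw [klArr_of_absCont hpq, klArr_of_absCont hpr, klArr_of_absCont hrq,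
      ← ENNReal.ofReal_add (sum_mul_log_div_nonneg hp hr0 hpr hpsum)
        (sum_mul_log_div_nonneg hr0 hq hrq (hrsum.trans hsum)),
      sum_mul_log_div_eq_add hpr hrq, sum_mul_log_scaleToMargin_div g hpm hpq,
      sum_mul_log_scaleToMargin_div g (fiberSum_scaleToMargin g hs) hrq]
  · have hpr : ¬ ∀ i, scaleToMargin g q s i = 0 → p i = 0 :=
      fun hpr => hpq fun i hi => hpr i (hrq i hi)
    rw [klArr_of_not_absCont hpq, klArr_of_not_absCont hpr, top_add]

end Fiber

lemma marginArr_eq_fiberSum {d n : ℕ} (p : (Fin d → Fin n) → ℝ) (J : Finset (Fin d)) :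
    marginArr p J = fiberSum J.restrict p := by
  funext iJ
  unfold marginArr fiberSum
  congr 1
  ext i
  simp [funext_iff]

theorem Iprojection_on_frechetClass_general
    (d n : ℕ)
    (J : Finset (Fin d))
    (sJ : (J → Fin n) → ℝ) (hsJ : IsProbArray sJ)
    (qd : (Fin d → Fin n) → ℝ) (hqd : IsProbArray qd)
    (hsupp : ∀ iJ : J → Fin n, 0 < sJ iJ → 0 < marginArr qd J iJ)
    (FJ : Set ((Fin d → Fin n) → ℝ))
    (hFJ : FJ = {p | IsProbArray p ∧ ∀ iJ : J → Fin n, marginArr p J iJ = sJ iJ})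
    (qs : (Fin d → Fin n) → ℝ)
    (hqs : qs = fun i =>
      qd i * sJ (fun j => i j) / marginArr qd J (fun j => i j)) :
    qs ∈ FJ ∧
    (∀ p ∈ FJ, klArr qs qd ≤ klArr p qd) ∧
    (∀ p ∈ FJ, (∀ p' ∈ FJ, klArr p qd ≤ klArr p' qd) → p = qs) := by
  have hqs' : qs = scaleToMargin J.restrict qd sJ := by
    rw [hqs, marginArr_eq_fiberSum]
    funext i
    exact mul_div_assoc _ _ _
  have hs : ∀ k, fiberSum J.restrict qd k = 0 → sJ k = 0 := fun k hk =>
    le_antisymm (not_lt.1 fun h => (hsupp k h).ne' (marginArr_eq_fiberSum qd J ▸ hk)) (hsJ.1 k)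
  have hmem : qs ∈ FJ := by
    rw [hFJ, hqs']
    refine ⟨⟨scaleToMargin_nonneg _ hqd.1 hsJ.1, (sum_scaleToMargin _ hs).trans hsJ.2⟩,
      fun iJ => ?_⟩
    rw [marginArr_eq_fiberSum, fiberSum_scaleToMargin _ hs]
  have hpyth : ∀ p ∈ FJ, klArr p qd = klArr p qs + klArr qs qd := by
    rw [hFJ, hqs']
    rintro p ⟨hp, hpm⟩
    exact klArr_eq_klArr_scaleToMargin_add _ hp.1 hqd.1 hs (hsJ.2.trans hqd.2.symm)
      ((marginArr_eq_fiberSum p J).symm.trans (funext hpm))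
  refine ⟨hmem, fun p hp => (hpyth p hp).symm ▸ le_add_self, fun p hp hmin => ?_⟩
  have hfin : klArr qs qd ≠ ⊤ := by
    rw [hqs', klArr_of_absCont (scaleToMargin_absCont _)]
    exact ofReal_ne_top
  have hzero : klArr p qs = 0 := by
    have hle : klArr p qs + klArr qs qd ≤ 0 + klArr qs qd := by
      simpa [hpyth p hp] using hmin qs hmem
    exact nonpos_iff_eq_zero.1 (ENNReal.le_of_add_le_add_right hfin hle)
  rw [hFJ] at hp hmem
  exact eq_of_klArr_eq_zero hp.1.1 hmem.1.1 (hp.1.2.trans hmem.1.2.symm) hzero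

/-- The `I`-projection of `q†` on the Fréchet class `F_J = {p : p^(J) = s^J}`
exists, is unique, and is given by marginal scaling. -/
theorem Iprojection_on_frechetClass
    (d n : ℕ) (hd : 2 ≤ d) (hn : 2 ≤ n)
    (J : Finset (Fin d)) (hJ : J.Nonempty)
    (sJ : (J → Fin n) → ℝ) (hsJ : IsProbArray sJ)
    (qd : (Fin d → Fin n) → ℝ) (hqd : IsProbArray qd)
    (hsupp : ∀ iJ : J → Fin n, 0 < sJ iJ → 0 < marginArr qd J iJ)
    (FJ : Set ((Fin d → Fin n) → ℝ))
    (hFJ : FJ = {p | IsProbArray p ∧ ∀ iJ : J → Fin n, marginArr p J iJ = sJ iJ})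
    (qs : (Fin d → Fin n) → ℝ)
    (hqs : qs = fun i =>
      qd i * sJ (fun j => i j) / marginArr qd J (fun j => i j)) :
    qs ∈ FJ ∧
    (∀ p ∈ FJ, klArr qs qd ≤ klArr p qd) ∧
    (∀ p ∈ FJ, (∀ p' ∈ FJ, klArr p qd ≤ klArr p' qd) → p = qs) :=
  Iprojection_on_frechetClass_general d n J sJ hsJ qd hqd hsupp FJ hFJ qs hqs
end

section
/- With q†, h, a, Λ as above: if there exists a probability array p with Σ_i p_i h_i = a and supp(p) = supp(q†), then a belongs to the range of Λ. -/
open Real BigOperators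

/-!
`Λ λ = a` says that the exponential tilt `q†ᵢ e^{λ hᵢ}` has mean `a`, i.e. that `λ` is a
critical point of `G λ = ∑ q†ᵢ e^{λ (hᵢ - a)}`. As `p` has mean `a` and the same support as
`q†`, either `h = a` on that support (and `λ = 0` works) or `h - a` takes both signs there;
then `G` is coercive, and its global minimiser is the required `λ`.
-/

open Filter

section ExponentialTilt

variable {ι : Type*} [Fintype ι] {p q c : ι → ℝ}

lemma hasDerivAt_sum_mul_exp_mul (q c : ι → ℝ) (t : ℝ) :
    HasDerivAt (fun x => ∑ i, q i * exp (x * c i)) (∑ i, q i * (c i * exp (t * c i))) t :=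
  HasDerivAt.fun_sum fun i _ => by
    simpa [mul_comm] using ((hasDerivAt_mul_const (c i)).exp).const_mul (q i)

lemma tendsto_sum_mul_exp_mul {l : Filter ℝ} (hq : ∀ i, 0 ≤ q i) {j : ι} (hqj : 0 < q j)
    (hl : Tendsto (fun x => x * c j) l atTop) :
    Tendsto (fun x => ∑ i, q i * exp (x * c i)) l atTop :=
  tendsto_atTop_mono
    (fun _ => Finset.single_le_sum (fun i _ => mul_nonneg (hq i) (exp_pos _).le)
      (Finset.mem_univ j))
    ((tendsto_exp_atTop.comp hl).const_mul_atTop hqj)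

lemma exists_sum_mul_mul_exp_mul_eq_zero_of_pos_of_neg (hq : ∀ i, 0 ≤ q i)
    (hpos : ∃ i, 0 < q i ∧ 0 < c i) (hneg : ∃ i, 0 < q i ∧ c i < 0) :
    ∃ x, ∑ i, q i * (c i * exp (x * c i)) = 0 := by
  obtain ⟨j, hqj, hcj⟩ := hpos
  obtain ⟨k, hqk, hck⟩ := hneg
  have hcont : Continuous fun x => ∑ i, q i * exp (x * c i) := by fun_prop
  have hcoercive : Tendsto (fun x => ∑ i, q i * exp (x * c i)) (cocompact ℝ) atTop := by
    rw [cocompact_eq_atBot_atTop]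
    exact (tendsto_sum_mul_exp_mul hq hqk (tendsto_id.atBot_mul_const_of_neg hck)).sup
      (tendsto_sum_mul_exp_mul hq hqj (tendsto_id.atTop_mul_const hcj))
  obtain ⟨x, hx⟩ := hcont.exists_forall_le hcoercive
  exact ⟨x, IsLocalMin.hasDerivAt_eq_zero (Eventually.of_forall hx)
    (hasDerivAt_sum_mul_exp_mul q c x)⟩

lemma exists_pos_of_sum_mul_eq_zero (hp : ∀ i, 0 ≤ p i) (hc : ∑ i, p i * c i = 0) {j : ι}
    (hpj : 0 < p j) (hcj : c j < 0) : ∃ i, 0 < p i ∧ 0 < c i := by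
  by_contra! hnonpos
  have hle : ∀ i ∈ Finset.univ, p i * c i ≤ 0 := fun i _ =>
    (hp i).eq_or_lt.elim (fun h => by simp [← h])
      fun h => mul_nonpos_of_nonneg_of_nonpos h.le (hnonpos i h)
  have hlt := Finset.sum_lt_sum hle ⟨j, Finset.mem_univ j, mul_neg_of_pos_of_neg hpj hcj⟩
  simp [hc] at hlt

lemma exists_pos_and_exists_neg_of_sum_mul_eq_zero (hp : ∀ i, 0 ≤ p i)
    (hc : ∑ i, p i * c i = 0) {j : ι} (hpj : 0 < p j) (hcj : c j ≠ 0) :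
    (∃ i, 0 < p i ∧ 0 < c i) ∧ ∃ i, 0 < p i ∧ c i < 0 := by
  have hc' : ∑ i, p i * -c i = 0 := by simp [hc]
  rcases hcj.lt_or_gt with hcj | hcj
  · refine ⟨exists_pos_of_sum_mul_eq_zero hp hc hpj hcj, j, hpj, hcj⟩
  · obtain ⟨i, hpi, hci⟩ := exists_pos_of_sum_mul_eq_zero hp hc' hpj (neg_neg_of_pos hcj)
    exact ⟨⟨j, hpj, hcj⟩, i, hpi, neg_pos.1 hci⟩

lemma exists_sum_mul_mul_exp_mul_eq_zero (hq : ∀ i, 0 ≤ q i) (hp : ∀ i, 0 ≤ p i)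
    (hpq : ∀ i, 0 < p i ↔ 0 < q i) (hc : ∑ i, p i * c i = 0) :
    ∃ x, ∑ i, q i * (c i * exp (x * c i)) = 0 := by
  by_cases hzero : ∀ i, 0 < q i → c i = 0
  · refine ⟨0, Finset.sum_eq_zero fun i _ => ?_⟩
    rcases (hq i).eq_or_lt with hqi | hqi
    · simp [← hqi]
    · simp [hzero i hqi]
  push Not at hzero
  obtain ⟨j, hqj, hcj⟩ := hzero
  have hpj : 0 < p j := (hpq j).2 hqj
  obtain ⟨⟨i, hpi, hci⟩, ⟨k, hpk, hck⟩⟩ :=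
    exists_pos_and_exists_neg_of_sum_mul_eq_zero hp hc hpj hcj
  exact exists_sum_mul_mul_exp_mul_eq_zero_of_pos_of_neg hq ⟨i, (hpq i).1 hpi, hci⟩
    ⟨k, (hpq k).1 hpk, hck⟩

end ExponentialTilt

theorem mem_range_Lambda_of_exists_fullSupport_general
    (d n : ℕ)
    (qd : (Fin d → Fin n) → ℝ) (hqd : IsProbArray qd)
    (h : (Fin d → Fin n) → ℝ) (a : ℝ)
    (B : Finset (Fin d → Fin n))
    (hB : B = Finset.univ.filter (fun i => 0 < qd i ∧ h i ≠ 0))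
    (Λ : ℝ → ℝ)
    (hΛ : Λ = fun lam =>
      (∑ i ∈ B, h i * qd i * Real.exp (lam * h i)) /
      (∑ i : Fin d → Fin n, qd i * Real.exp (lam * h i)))
    (hexists : ∃ p : (Fin d → Fin n) → ℝ, IsProbArray p ∧
      (∑ i : Fin d → Fin n, p i * h i = a) ∧ (∀ i, 0 < p i ↔ 0 < qd i)) :
    a ∈ Set.range Λ := by
  obtain ⟨p, ⟨hp0, hp1⟩, hpa, hpq⟩ := hexists
  obtain ⟨hq0, hq1⟩ := hqd
  have hmean : ∑ i, p i * (h i - a) = 0 := by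
    simp [mul_sub, Finset.sum_sub_distrib, hpa, ← Finset.sum_mul, hp1]
  obtain ⟨lam, hlam⟩ := exists_sum_mul_mul_exp_mul_eq_zero hq0 hp0 hpq hmean
  have hnum : ∑ i ∈ B, h i * qd i * exp (lam * h i) = ∑ i, h i * qd i * exp (lam * h i) := by
    subst hB
    refine Finset.sum_filter_of_ne fun i _ hi => ?_
    have hhq : h i * qd i ≠ 0 := left_ne_zero_of_mul hi
    exact ⟨(hq0 i).lt_of_ne' (right_ne_zero_of_mul hhq), left_ne_zero_of_mul hhq⟩
  have hden : 0 < ∑ i, qd i * exp (lam * h i) := by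
    obtain ⟨j, -, hqj⟩ :=
      Finset.exists_lt_of_sum_lt (by simp [hq1] : ∑ _i, (0 : ℝ) < ∑ i, qd i)
    exact Finset.sum_pos' (fun i _ => mul_nonneg (hq0 i) (exp_pos _).le)
      ⟨j, Finset.mem_univ j, mul_pos hqj (exp_pos _)⟩
  have htilt : ∑ i, qd i * ((h i - a) * exp (lam * h i)) = 0 := by
    simpa [mul_sub, exp_sub, ← mul_div_assoc, ← Finset.sum_div] using hlam
  refine ⟨lam, ?_⟩
  simp only [hΛ]
  rw [hnum, div_eq_iff hden.ne', Finset.mul_sum, ← sub_eq_zero, ← Finset.sum_sub_distrib,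
    ← htilt]
  exact Finset.sum_congr rfl fun i _ => by ring

/-- If there is a probability array `p` with `∑ i, p i h i = a` and
`supp p = supp q†`, then `a` belongs to the range of `Λ`. -/
theorem mem_range_Lambda_of_exists_fullSupport
    (d n : ℕ) (hd : 2 ≤ d) (hn : 2 ≤ n)
    (qd : (Fin d → Fin n) → ℝ) (hqd : IsProbArray qd)
    (h : (Fin d → Fin n) → ℝ) (a : ℝ)
    (B : Finset (Fin d → Fin n))
    (hB : B = Finset.univ.filter (fun i => 0 < qd i ∧ h i ≠ 0))
    (Λ : ℝ → ℝ)
    (hΛ : Λ = fun lam =>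
      (∑ i ∈ B, h i * qd i * Real.exp (lam * h i)) /
      (∑ i : Fin d → Fin n, qd i * Real.exp (lam * h i)))
    (hexists : ∃ p : (Fin d → Fin n) → ℝ, IsProbArray p ∧
      (∑ i : Fin d → Fin n, p i * h i = a) ∧ (∀ i, 0 < p i ↔ 0 < qd i)) :
    a ∈ Set.range Λ :=
  mem_range_Lambda_of_exists_fullSupport_general d n qd hqd h a B hB Λ hΛ hexists
end
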